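/- Let w be a word over 𝒩 = {1' < 1 < 2' < 2 < ⋯} such that (i) the sequence (c_k(w) + c_{k'}(w))_{k≥1} is a strict partition and (ii) for each k ≥ 1, the rightmost letter x of w with |x| = k is unprimed (x = k). Then w satisfies the lattice property of Definition 3.5 (Stembridge's lattice property via the doubled word w ŵ_rev) if and only if w satisfies the 'lattice property' of Definition 3.3 (conditions (L1), (L2), (L3) on the starred word w*). -/

import Mathlib

/- Letters of 𝒩 = {1' < 1 < 2' < 2 < ⋯} are pairs `(k, b) : ℕ × Bool`:
`(k, false)` is the unprimed letter `k`, `(k, true)` is the primed letter `k'`. -/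

/-- number of unprimed letters `k` in `w`, i.e. `c_k(w)`. -/
def cntU (w : List (ℕ × Bool)) (k : ℕ) : ℕ := (w.filter fun x => x = (k, false)).length

/-- number of primed letters `k'` in `w`, i.e. `c_{k'}(w)`. -/
def cntP (w : List (ℕ × Bool)) (k : ℕ) : ℕ := (w.filter fun x => x = (k, true)).length

/-- number of letters of value `k`, i.e. `c_k(w) + c_{k'}(w)`. -/
def valCount (w : List (ℕ × Bool)) (k : ℕ) : ℕ := (w.filter fun x => x.1 = k).length

/-- the `i`-th letter of `w` (0-based). -/
def getL (w : List (ℕ × Bool)) (i : ℕ) : ℕ × Bool := w.getD i (0, false)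

/-- the value of the `i`-th letter of the starred word `w*` (same as the value in `w`). -/
def starVal (w : List (ℕ × Bool)) (i : ℕ) : ℕ := (getL w i).1

/-- the subscript of the `i`-th letter in the starred word `w*`: for each value `k`, the
unprimed `k`'s are labelled `1, 2, …` from left to right, and then the primed `k'`'s are
labelled from right to left continuing from `c_k(w) + 1`. -/
def starSub (w : List (ℕ × Bool)) (i : ℕ) : ℕ :=
  if (getL w i).2 = false then cntU (w.take i) (getL w i).1 + 1
  else cntU w (getL w i).1 + cntP (w.drop (i + 1)) (getL w i).1 + 1

/-- Definition 3.3: the "lattice property" (L1), (L2), (L3) of the starred word `w*`. -/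
def LatticeNew (w : List (ℕ × Bool)) : Prop :=
  (∀ k, 1 ≤ k → ∀ i < w.length, starVal w i = k → starSub w i = 1 →
    ∀ j < i, starVal w j ≠ k + 1) ∧
  (∀ k m, 1 ≤ k → 1 ≤ m → ∀ s t, s < t → t < w.length →
    starVal w s = k + 1 → starSub w s = m → starVal w t = k → starSub w t = m + 1 →
    ∀ u, s ≤ u → u ≤ t → starVal w u = k + 1 → starSub w u ≤ m) ∧
  (∀ k m, 1 ≤ k → 1 ≤ m → ∀ s t, s < t → t < w.length →
    starVal w s = k → starSub w s = m + 1 → starVal w t = k + 1 → starSub w t = m →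
    ∀ u, s ≤ u → u ≤ t → starVal w u = k → m + 1 ≤ starSub w u)

/-- `ŵ`: replace each unprimed `k` by `(k+1)'` and each primed `k'` by unprimed `k`. -/
def hatW (w : List (ℕ × Bool)) : List (ℕ × Bool) :=
  w.map fun x => if x.2 then (x.1, false) else (x.1 + 1, true)

/-- the doubled word `w ŵ_rev`. -/
def doubled (w : List (ℕ × Bool)) : List (ℕ × Bool) := w ++ (hatW w).reverse

/-- Definition 3.5 (Stembridge): with `a = w ŵ_rev` and `m_k(i)` the number of unprimed
`k`'s among the first `i` letters of `a`, the lattice property states that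
`m_{k+1}(i) = m_k(i)` implies that the `(i+1)`-st letter of `a` has value `≠ k+1`. -/
def LatticeSt (w : List (ℕ × Bool)) : Prop :=
  ∀ k, 1 ≤ k → ∀ i < (doubled w).length,
    cntU ((doubled w).take i) (k + 1) = cntU ((doubled w).take i) k →
    starVal (doubled w) i ≠ k + 1

/-!
The starred word is the word of ranks of the unprimed letters of the doubled word
`a = w ŵ_rev`: an unprimed `k` at position `i` of `w` gets the subscript `m_k(i) + 1`, and a
primed `k'` at position `i` becomes the unprimed `k` of `ŵ_rev` at position `2|w| - 1 - i`,
whose rank `m_k(2|w| - 1 - i) + 1` is exactly its starred subscript. Stembridge's condition thus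
says that `m_{k+1} < m_k` just before every letter of `a` of value `k + 1`, and (L1)–(L3)
follow by comparing subscripts. Conversely, since each `m_k` increases in unit steps, a failure
of Stembridge's condition yields letters with prescribed subscripts forming a pattern forbidden
by (L1)–(L3), except at the extreme values, which are excluded by the strict partition condition
together with (ii) (every `k'` has an unprimed `k` to its right).
-/

theorem exists_upcrossing {g : ℕ → ℕ} (hg : ∀ n, g (n + 1) ≤ g n + 1) {a b m : ℕ}
    (hab : a ≤ b) (ha : g a ≤ m) (hb : m < g b) :
    ∃ s, a ≤ s ∧ s < b ∧ g s = m ∧ g (s + 1) = m + 1 := by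
  induction b, hab using Nat.le_induction with
  | base => omega
  | succ b hab ih =>
    by_cases h : m < g b
    · obtain ⟨s, has, hsb, hs⟩ := ih h
      exact ⟨s, has, by omega, hs⟩
    · have := hg b
      exact ⟨b, hab, by omega, by omega, by omega⟩

theorem exists_downcrossing {g : ℕ → ℕ} (hg : ∀ n, g n ≤ g (n + 1) + 1) {a b σ : ℕ}
    (hab : a ≤ b) (hb : g b < σ) (ha : σ ≤ g a) :
    ∃ y, a ≤ y ∧ y < b ∧ g y = σ ∧ g (y + 1) + 1 = σ := by
  induction b, hab using Nat.le_induction with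
  | base => omega
  | succ b hab ih =>
    by_cases h : g b < σ
    · obtain ⟨y, hay, hyb, hy⟩ := ih h
      exact ⟨y, hay, by omega, hy⟩
    · have := hg b
      exact ⟨b, hab, by omega, by omega, by omega⟩

namespace StarredWord

variable {w : List (ℕ × Bool)} {k κ i j s t u m σ : ℕ} {b : Bool}

/-- `m_κ(i)` for `i ≤ |w|`. -/
def prefixCount (w : List (ℕ × Bool)) (κ i : ℕ) : ℕ := cntU (w.take i) κ

/-- `m_κ(2|w| - i)`: all unprimed `κ`'s of `w`, plus those of `ŵ_rev` coming from the primed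
letters `κ'` of `w.drop i`. -/
def mirrorCount (w : List (ℕ × Bool)) (κ i : ℕ) : ℕ := cntU w κ + cntP (w.drop i) κ

theorem getL_of_lt (h : i < w.length) : getL w i = w[i] := List.getD_eq_getElem w _ h

theorem getL_eq_of_starVal (hv : starVal w i = κ) (hb : (getL w i).2 = b) :
    getL w i = (κ, b) := Prod.ext hv hb

theorem starSub_of_unprimed (hx : getL w i = (κ, false)) :
    starSub w i = prefixCount w κ i + 1 := by
  simp [starSub, hx, prefixCount]

theorem starSub_of_primed (hx : getL w i = (κ, true)) :
    starSub w i = mirrorCount w κ (i + 1) + 1 := by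
  simp [starSub, hx, mirrorCount]

theorem valCount_eq_cntU_add_cntP : valCount w κ = cntU w κ + cntP w κ := by
  induction w with
  | nil => simp [valCount, cntU, cntP]
  | cons x l ih =>
    obtain ⟨a, b⟩ := x
    by_cases ha : a = κ <;> cases b <;>
      simp [valCount, cntU, cntP, ha] at * <;> omega

theorem valCount_pos (hi : i < w.length) (hv : starVal w i = κ) : 0 < valCount w κ := by
  have hmem : getL w i ∈ w := getL_of_lt hi ▸ List.getElem_mem hi
  exact List.length_pos_of_mem (List.mem_filter.mpr ⟨hmem, by simpa [starVal] using hv⟩)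

section prefixCount

theorem prefixCount_zero : prefixCount w κ 0 = 0 := by simp [prefixCount, cntU]

theorem prefixCount_of_length_le (h : w.length ≤ i) : prefixCount w κ i = cntU w κ := by
  rw [prefixCount, List.take_of_length_le h]

theorem prefixCount_mono : Monotone (prefixCount w κ) := fun i j hij => by
  have : w.take i = (w.take j).take i := by rw [List.take_take, Nat.min_eq_left hij]
  rw [prefixCount, prefixCount, this]
  exact ((List.take_sublist i _).filter _).length_le

theorem prefixCount_le_cntU : prefixCount w κ i ≤ cntU w κ :=
  ((List.take_sublist i w).filter _).length_le

theorem prefixCount_succ (h : i < w.length) :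
    prefixCount w κ (i + 1) = prefixCount w κ i + if getL w i = (κ, false) then 1 else 0 := by
  simp only [prefixCount, cntU, List.take_add_one, List.getElem?_eq_getElem h, getL_of_lt h,
    Option.toList_some, List.filter_append, List.length_append]
  by_cases hx : w[i] = (κ, false) <;> simp [hx]

theorem prefixCount_succ_of_unprimed (h : i < w.length) (hx : getL w i = (κ, false)) :
    prefixCount w κ (i + 1) = prefixCount w κ i + 1 := by
  rw [prefixCount_succ h, if_pos hx]

theorem prefixCount_succ_le : prefixCount w κ (i + 1) ≤ prefixCount w κ i + 1 := by
  by_cases h : i < w.length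
  · rw [prefixCount_succ h]; split <;> omega
  · rw [prefixCount_of_length_le (by omega), prefixCount_of_length_le (by omega)]; omega

theorem unprimed_of_prefixCount_lt_succ (h : prefixCount w κ i < prefixCount w κ (i + 1)) :
    i < w.length ∧ getL w i = (κ, false) := by
  have hi : i < w.length := by
    by_contra hi
    rw [prefixCount_of_length_le (by omega), prefixCount_of_length_le (by omega)] at h
    exact lt_irrefl _ h
  refine ⟨hi, ?_⟩
  by_contra hx
  rw [prefixCount_succ hi, if_neg hx] at h
  omega

theorem prefixCount_lt_cntU_of_unprimed (h : i < w.length) (hx : getL w i = (κ, false)) :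
    prefixCount w κ i < cntU w κ := by
  have := prefixCount_succ_of_unprimed h hx
  have : prefixCount w κ (i + 1) ≤ cntU w κ := prefixCount_le_cntU
  omega

theorem exists_unprimed (ha : prefixCount w κ i ≤ m) (hb : m < prefixCount w κ j) :
    ∃ s, i ≤ s ∧ s < j ∧ s < w.length ∧ getL w s = (κ, false) ∧ prefixCount w κ s = m := by
  have hij : i ≤ j := by
    by_contra h
    have := prefixCount_mono (w := w) (κ := κ) (show j ≤ i by omega)
    omega
  obtain ⟨s, his, hsj, hs, hs'⟩ := exists_upcrossing (g := prefixCount w κ) (fun _ => prefixCount_succ_le) hij ha hb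
  obtain ⟨hsN, hx⟩ := unprimed_of_prefixCount_lt_succ (show prefixCount w κ s < _ by omega)
  exact ⟨s, his, hsj, hsN, hx, hs⟩

end prefixCount

section mirrorCount

theorem mirrorCount_zero : mirrorCount w κ 0 = valCount w κ := by
  simp [mirrorCount, valCount_eq_cntU_add_cntP]

theorem mirrorCount_of_length_le (h : w.length ≤ i) : mirrorCount w κ i = cntU w κ := by
  simp [mirrorCount, List.drop_eq_nil_of_le h, cntP]

theorem cntU_le_mirrorCount : cntU w κ ≤ mirrorCount w κ i := Nat.le_add_right _ _

theorem mirrorCount_anti : Antitone (mirrorCount w κ) := fun i j hij => by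
  have : w.drop j = (w.drop i).drop (j - i) := by rw [List.drop_drop]; congr 1; omega
  have : cntP (w.drop j) κ ≤ cntP (w.drop i) κ := by
    rw [this]; exact ((List.drop_sublist _ _).filter _).length_le
  simp only [mirrorCount]; omega

theorem mirrorCount_le_valCount : mirrorCount w κ i ≤ valCount w κ :=
  mirrorCount_zero (w := w) ▸ mirrorCount_anti (Nat.zero_le i)

theorem mirrorCount_succ (h : i < w.length) :
    mirrorCount w κ i = mirrorCount w κ (i + 1) + if getL w i = (κ, true) then 1 else 0 := by
  simp only [mirrorCount, cntP, List.drop_eq_getElem_cons h, getL_of_lt h, List.filter_cons]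
  by_cases hx : w[i] = (κ, true) <;> simp [hx, Nat.add_assoc]

theorem mirrorCount_eq_succ_add_one (h : i < w.length) (hx : getL w i = (κ, true)) :
    mirrorCount w κ i = mirrorCount w κ (i + 1) + 1 := by
  rw [mirrorCount_succ h, if_pos hx]

theorem mirrorCount_le_succ_add_one : mirrorCount w κ i ≤ mirrorCount w κ (i + 1) + 1 := by
  by_cases h : i < w.length
  · rw [mirrorCount_succ h]; split <;> omega
  · rw [mirrorCount_of_length_le (by omega), mirrorCount_of_length_le (by omega)]; omega

theorem primed_of_mirrorCount_succ_lt (h : mirrorCount w κ (i + 1) < mirrorCount w κ i) :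
    i < w.length ∧ getL w i = (κ, true) := by
  have hi : i < w.length := by
    by_contra hi
    rw [mirrorCount_of_length_le (by omega), mirrorCount_of_length_le (by omega)] at h
    exact lt_irrefl _ h
  refine ⟨hi, ?_⟩
  by_contra hx
  rw [mirrorCount_succ hi, if_neg hx] at h
  omega

theorem exists_primed (hb : mirrorCount w κ j < σ) (ha : σ ≤ mirrorCount w κ i) :
    ∃ y, i ≤ y ∧ y < j ∧ y < w.length ∧ getL w y = (κ, true) ∧
      mirrorCount w κ (y + 1) + 1 = σ := by
  have hij : i ≤ j := by
    by_contra h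
    have := mirrorCount_anti (w := w) (κ := κ) (show j ≤ i by omega)
    omega
  obtain ⟨y, hiy, hyj, hy, hy'⟩ :=
    exists_downcrossing (g := mirrorCount w κ) (fun _ => mirrorCount_le_succ_add_one) hij hb ha
  obtain ⟨hyN, hx⟩ := primed_of_mirrorCount_succ_lt (show _ < mirrorCount w κ y by omega)
  exact ⟨y, hiy, hyj, hyN, hx, hy'⟩

end mirrorCount

section starSub

theorem prefixCount_lt_starSub (hut : u ≤ t) (ht : starVal w t = κ) :
    prefixCount w κ u < starSub w t := by
  cases hb : (getL w t).2
  · rw [starSub_of_unprimed (getL_eq_of_starVal ht hb)]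
    exact Nat.lt_succ_of_le (prefixCount_mono hut)
  · rw [starSub_of_primed (getL_eq_of_starVal ht hb)]
    exact Nat.lt_succ_of_le (prefixCount_le_cntU.trans cntU_le_mirrorCount)

theorem starSub_le_mirrorCount (hut : u < t) (htN : t < w.length) (ht : starVal w t = κ) :
    starSub w t ≤ mirrorCount w κ (u + 1) := by
  cases hb : (getL w t).2
  · have hx := getL_eq_of_starVal ht hb
    rw [starSub_of_unprimed hx]
    exact (prefixCount_lt_cntU_of_unprimed htN hx).trans_le cntU_le_mirrorCount
  · have hx := getL_eq_of_starVal ht hb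
    rw [starSub_of_primed hx, ← mirrorCount_eq_succ_add_one htN hx]
    exact mirrorCount_anti hut

theorem starSub_le_prefixCount (hsN : s < w.length) (hsu : s < u) (hx : getL w s = (κ, false)) :
    starSub w s ≤ prefixCount w κ u := by
  rw [starSub_of_unprimed hx, ← prefixCount_succ_of_unprimed hsN hx]
  exact prefixCount_mono hsu

theorem starSub_le_of_primed (hsu : s ≤ u) (hs : getL w s = (κ, true))
    (hu : getL w u = (κ, true)) : starSub w u ≤ starSub w s := by
  rw [starSub_of_primed hs, starSub_of_primed hu]
  exact Nat.succ_le_succ (mirrorCount_anti (Nat.succ_le_succ hsu))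

end starSub

section doubled

def hatLetter (x : ℕ × Bool) : ℕ × Bool := if x.2 then (x.1, false) else (x.1 + 1, true)

theorem cntU_map_hatLetter (l : List (ℕ × Bool)) : cntU (l.map hatLetter) κ = cntP l κ := by
  induction l with
  | nil => simp [cntU, cntP]
  | cons x l ih =>
    obtain ⟨a, b⟩ := x
    cases b <;> by_cases ha : a = κ <;> simp_all [cntU, cntP, hatLetter]

theorem length_doubled : (doubled w).length = w.length + w.length := by
  simp [doubled, hatW]

theorem cntU_take_doubled_of_le (h : i ≤ w.length) :
    cntU ((doubled w).take i) κ = prefixCount w κ i := by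
  rw [doubled, List.take_append_of_le_length h, prefixCount]

theorem getL_doubled_of_lt (h : i < w.length) : getL (doubled w) i = getL w i := by
  simp only [doubled, getL]
  rw [List.getD_append _ _ _ i h]

theorem cntU_take_doubled_mirror (hj : j < w.length) :
    cntU ((doubled w).take (w.length + w.length - 1 - j)) κ = mirrorCount w κ (j + 1) := by
  have hlen : (hatW w).length = w.length := by simp [hatW]
  rw [show w.length + w.length - 1 - j = w.length + (w.length - 1 - j) by omega, doubled,
    List.take_append, List.take_of_length_le (by omega), Nat.add_sub_cancel_left,
    List.take_reverse, hlen, show w.length - (w.length - 1 - j) = j + 1 by omega]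
  simp only [cntU, List.filter_append, List.length_append, List.filter_reverse,
    List.length_reverse]
  rw [← cntU, ← cntU, show hatW w = w.map hatLetter from rfl, ← List.map_drop,
    cntU_map_hatLetter, mirrorCount]

theorem getL_doubled_mirror (hj : j < w.length) :
    getL (doubled w) (w.length + w.length - 1 - j) = hatLetter (getL w j) := by
  have hI : w.length + w.length - 1 - j < (doubled w).length := by
    rw [length_doubled]; omega
  rw [getL, List.getD_eq_getElem _ _ hI]
  simp only [doubled] at hI ⊢
  rw [List.getElem_append_right (by omega), List.getElem_reverse]
  simp only [hatW, List.getElem_map, List.length_map,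
    show w.length - 1 - (w.length + w.length - 1 - j - w.length) = j by omega, getL_of_lt hj]
  rfl

end doubled

/-- Stembridge's condition at the positions of `w` in `w ŵ_rev`. -/
def StemFirst (w : List (ℕ × Bool)) (k : ℕ) : Prop :=
  ∀ i < w.length, starVal w i = k + 1 → prefixCount w (k + 1) i ≠ prefixCount w k i

/-- Stembridge's condition at the positions of `ŵ_rev` in `w ŵ_rev`: the letter of `ŵ` at `i`
has value `k + 1` exactly when `w_i` is `(k+1)'` or `k`. -/
def StemSecond (w : List (ℕ × Bool)) (k : ℕ) : Prop :=
  ∀ i < w.length, (getL w i = (k + 1, true) ∨ getL w i = (k, false)) →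
    mirrorCount w (k + 1) (i + 1) ≠ mirrorCount w k (i + 1)

theorem hatLetter_fst_eq_succ_iff {x : ℕ × Bool} :
    (hatLetter x).1 = k + 1 ↔ x = (k + 1, true) ∨ x = (k, false) := by
  obtain ⟨a, b⟩ := x
  cases b <;> simp [hatLetter]

theorem latticeSt_iff : LatticeSt w ↔ ∀ k, 1 ≤ k → StemFirst w k ∧ StemSecond w k := by
  refine forall₂_congr fun k _ => ⟨fun h => ⟨?_, ?_⟩, fun ⟨hA, hB⟩ p hp => ?_⟩
  · intro i hi hv heq
    refine h i (by rw [length_doubled]; omega) ?_ ?_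
    · rwa [cntU_take_doubled_of_le hi.le, cntU_take_doubled_of_le hi.le]
    · rwa [starVal, getL_doubled_of_lt hi]
  · intro j hj hl heq
    refine h (w.length + w.length - 1 - j) (by rw [length_doubled]; omega) ?_ ?_
    · rwa [cntU_take_doubled_mirror hj, cntU_take_doubled_mirror hj]
    · rw [starVal, getL_doubled_mirror hj, hatLetter_fst_eq_succ_iff]
      exact hl
  · rw [length_doubled] at hp
    obtain hpN | hpN := Nat.lt_or_ge p w.length
    · rw [cntU_take_doubled_of_le hpN.le, cntU_take_doubled_of_le hpN.le, starVal,
        getL_doubled_of_lt hpN]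
      exact fun heq hv => hA p hpN hv heq
    · obtain ⟨j, hj, rfl⟩ : ∃ j < w.length, p = w.length + w.length - 1 - j :=
        ⟨w.length + w.length - 1 - p, by omega, by omega⟩
      rw [cntU_take_doubled_mirror hj, cntU_take_doubled_mirror hj, starVal,
        getL_doubled_mirror hj]
      exact fun heq hl => hB j hj (hatLetter_fst_eq_succ_iff.mp hl) heq

def L1At (w : List (ℕ × Bool)) (k : ℕ) : Prop :=
  ∀ i < w.length, starVal w i = k → starSub w i = 1 → ∀ j < i, starVal w j ≠ k + 1

def L2At (w : List (ℕ × Bool)) (k : ℕ) : Prop :=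
  ∀ m, 1 ≤ m → ∀ s t, s < t → t < w.length →
    starVal w s = k + 1 → starSub w s = m → starVal w t = k → starSub w t = m + 1 →
    ∀ u, s ≤ u → u ≤ t → starVal w u = k + 1 → starSub w u ≤ m

def L3At (w : List (ℕ × Bool)) (k : ℕ) : Prop :=
  ∀ m, 1 ≤ m → ∀ s t, s < t → t < w.length →
    starVal w s = k → starSub w s = m + 1 → starVal w t = k + 1 → starSub w t = m →
    ∀ u, s ≤ u → u ≤ t → starVal w u = k → m + 1 ≤ starSub w u

theorem latticeNew_iff : LatticeNew w ↔ ∀ k, 1 ≤ k → L1At w k ∧ L2At w k ∧ L3At w k := by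
  simp only [LatticeNew, L1At, L2At, L3At]
  exact ⟨fun ⟨h1, h2, h3⟩ k hk => ⟨h1 k hk, fun m => h2 k m hk, fun m => h3 k m hk⟩,
    fun h => ⟨fun k hk => (h k hk).1, fun k m hk => (h k hk).2.1 m,
      fun k m hk => (h k hk).2.2 m⟩⟩

section stembridge

theorem StemFirst.prefixCount_le (hA : StemFirst w k) :
    ∀ i, prefixCount w (k + 1) i ≤ prefixCount w k i
  | 0 => by simp [prefixCount_zero]
  | i + 1 => by
    have ih := hA.prefixCount_le i
    have hmono : prefixCount w k i ≤ prefixCount w k (i + 1) := prefixCount_mono i.le_succ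
    by_cases hstep : prefixCount w (k + 1) i < prefixCount w (k + 1) (i + 1)
    · obtain ⟨hi, hx⟩ := unprimed_of_prefixCount_lt_succ hstep
      have := hA i hi (by simp [starVal, hx])
      have := prefixCount_succ_le (w := w) (κ := k + 1) (i := i)
      omega
    · omega

theorem StemFirst.prefixCount_lt (hA : StemFirst w k) (hi : i < w.length)
    (hv : starVal w i = k + 1) : prefixCount w (k + 1) i < prefixCount w k i :=
  (hA.prefixCount_le i).lt_of_ne (hA i hi hv)

theorem StemSecond.mirrorCount_le (hB : StemSecond w k) (hA : StemFirst w k) (i : ℕ) :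
    mirrorCount w (k + 1) i ≤ mirrorCount w k i := by
  by_cases hi : w.length ≤ i
  · rw [mirrorCount_of_length_le hi, mirrorCount_of_length_le hi,
      ← prefixCount_of_length_le le_rfl, ← prefixCount_of_length_le le_rfl]
    exact hA.prefixCount_le _
  have ih := hB.mirrorCount_le hA (i + 1)
  have hanti : mirrorCount w k (i + 1) ≤ mirrorCount w k i := mirrorCount_anti i.le_succ
  by_cases hstep : mirrorCount w (k + 1) (i + 1) < mirrorCount w (k + 1) i
  · obtain ⟨hi, hx⟩ := primed_of_mirrorCount_succ_lt hstep
    have := hB i hi (Or.inl hx)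
    have := mirrorCount_eq_succ_add_one hi hx
    omega
  · omega
termination_by w.length - i

theorem StemSecond.mirrorCount_lt (hB : StemSecond w k) (hA : StemFirst w k)
    (hi : i < w.length) (hx : getL w i = (k + 1, true) ∨ getL w i = (k, false)) :
    mirrorCount w (k + 1) (i + 1) < mirrorCount w k (i + 1) :=
  (hB.mirrorCount_le hA _).lt_of_ne (hB i hi hx)

theorem StemFirst.l1At (hA : StemFirst w k) : L1At w k := by
  intro i hi hv hsub j hji hvj
  have := prefixCount_lt_starSub hji.le hv
  have := hA.prefixCount_lt (hji.trans hi) hvj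
  omega

theorem StemFirst.l2At (hA : StemFirst w k) : L2At w k := by
  intro m _ s t hst htN _ hss hvt hstt u hsu hut hvu
  by_contra! hμ
  have huN : u < w.length := by omega
  have hut' := prefixCount_lt_starSub hut hvt
  have hu := hA.prefixCount_lt huN hvu
  cases hbu : (getL w u).2
  · rw [starSub_of_unprimed (getL_eq_of_starVal hvu hbu)] at hμ
    omega
  have hxu := getL_eq_of_starVal hvu hbu
  cases hbs : (getL w s).2
  · have hxs := getL_eq_of_starVal ‹_› hbs
    have hsu' : s < u := hsu.lt_of_ne (by rintro rfl; simp [hxu] at hxs)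
    have := starSub_le_prefixCount (hsu'.trans huN) hsu' hxs
    omega
  · have := starSub_le_of_primed hsu (getL_eq_of_starVal ‹_› hbs) hxu
    omega

theorem StemSecond.l3At (hB : StemSecond w k) (hA : StemFirst w k) : L3At w k := by
  intro m _ s t hst htN hvs hss hvt hstt u hsu hut hvu
  by_contra! hμ
  have hut' : u < t := hut.lt_of_ne (by rintro rfl; omega)
  have huN : u < w.length := by omega
  have ht := starSub_le_mirrorCount hut' htN hvt
  cases hbu : (getL w u).2
  · have hxu := getL_eq_of_starVal hvu hbu
    have hu := hB.mirrorCount_lt hA huN (Or.inr hxu)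
    cases hbs : (getL w s).2
    · have hxs := getL_eq_of_starVal hvs hbs
      rw [starSub_of_unprimed hxs] at hss
      rw [starSub_of_unprimed hxu] at hμ
      have := prefixCount_mono (w := w) (κ := k) hsu
      omega
    · have hxs := getL_eq_of_starVal hvs hbs
      rw [starSub_of_primed hxs] at hss
      have := mirrorCount_anti (w := w) (κ := k) (Nat.add_le_add_right hsu 1)
      omega
  · rw [starSub_of_primed (getL_eq_of_starVal hvu hbu)] at hμ
    have := hB.mirrorCount_le hA (u + 1)
    omega

end stembridge

section lattice

/-- Every primed `κ'` of `w` has an unprimed `κ` to its right. -/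
def UnprimedAfterPrimed (w : List (ℕ × Bool)) (κ : ℕ) : Prop :=
  ∀ i < w.length, getL w i = (κ, true) → prefixCount w κ i < cntU w κ

theorem unprimedAfterPrimed_of_rightmost_unprimed
    (hr : ∀ i < w.length, starVal w i = κ →
      (∀ j, i < j → j < w.length → starVal w j ≠ κ) → (getL w i).2 = false) :
    UnprimedAfterPrimed w κ := by
  intro i hi hx
  set r := Nat.findGreatest (fun j => starVal w j = κ) (w.length - 1)
  have hir : i ≤ r := Nat.le_findGreatest (by omega) (by simp [starVal, hx])
  have hrN : r < w.length := by have := Nat.findGreatest_le (P := fun j => starVal w j = κ) (w.length - 1); omega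
  have hvr : starVal w r = κ := Nat.findGreatest_spec (P := fun j => starVal w j = κ) (m := i) (by omega) (by simp [starVal, hx])
  have hxr : getL w r = (κ, false) := getL_eq_of_starVal hvr <| hr r hrN hvr
    fun j hrj hjN => Nat.findGreatest_is_greatest (P := fun j => starVal w j = κ) hrj (by omega)
  have hir' : i < r := hir.lt_of_ne (by rintro rfl; simp [hx] at hxr)
  exact (prefixCount_mono hir'.le).trans_lt (prefixCount_lt_cntU_of_unprimed hrN hxr)

theorem UnprimedAfterPrimed.cntU_pos (hU : UnprimedAfterPrimed w κ) (h : 0 < valCount w κ) :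
    0 < cntU w κ := by
  by_contra! h0
  obtain ⟨y, -, -, hyN, hx, -⟩ := exists_primed (w := w) (κ := κ) (i := 0) (j := w.length)
    (σ := 1) (by rw [mirrorCount_of_length_le le_rfl]; omega) (by rw [mirrorCount_zero]; omega)
  have := hU y hyN hx
  omega

theorem not_lt_of_unprimed (hL1 : L1At w k) (hL2 : L2At w k) (hst : s < t) (htN : t < w.length)
    (hvs : starVal w s = k + 1) (hxt : getL w t = (k, false))
    (hle : prefixCount w k t ≤ prefixCount w (k + 1) s) : False := by
  have hvt : starVal w t = k := by simp [starVal, hxt]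
  obtain hj | hj := Nat.eq_zero_or_pos (prefixCount w k t)
  · exact hL1 t htN hvt (by rw [starSub_of_unprimed hxt, hj]) s hst hvs
  obtain ⟨s₀, -, hs₀s, -, hx₀, hs₀⟩ := exists_unprimed (w := w) (κ := k + 1) (i := 0) (j := s)
    (m := prefixCount w k t - 1) (by rw [prefixCount_zero]; omega) (by omega)
  have := hL2 (prefixCount w k t) hj s₀ t (by omega) htN (by simp [starVal, hx₀])
    (by rw [starSub_of_unprimed hx₀]; omega) hvt (starSub_of_unprimed hxt) s hs₀s.le hst.le hvs
  have := prefixCount_lt_starSub le_rfl hvs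
  omega

/-- If `c_k ≤ c_{k+1}`, the `c_k`-th unprimed `k + 1` can neither precede the last unprimed `k`
(by `L1`, `L2`) nor follow it (by `L3`, applied to the rightmost `k'`, whose subscript is
`c_k + 1`); the strict partition condition guarantees that this `k'` exists. -/
theorem cntU_succ_lt (hL1 : L1At w k) (hL2 : L2At w k) (hL3 : L3At w k)
    (hU : UnprimedAfterPrimed w k)
    (hpart : valCount w (k + 1) ≠ 0 → valCount w (k + 1) < valCount w k)
    (hc : cntU w (k + 1) ≠ 0) : cntU w (k + 1) < cntU w k := by
  have hv : valCount w (k + 1) < valCount w k :=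
    hpart (by rw [valCount_eq_cntU_add_cntP]; omega)
  rw [valCount_eq_cntU_add_cntP (κ := k + 1)] at hv
  have hck := hU.cntU_pos (by omega)
  by_contra! hcc
  obtain ⟨s, -, -, hsN, hxs, hs⟩ := exists_unprimed (w := w) (κ := k + 1) (i := 0)
    (j := w.length) (m := cntU w k - 1) (by rw [prefixCount_zero]; omega)
    (by rw [prefixCount_of_length_le le_rfl]; omega)
  obtain ⟨t, -, -, htN, hxt, ht⟩ := exists_unprimed (w := w) (κ := k) (i := 0)
    (j := w.length) (m := cntU w k - 1) (by rw [prefixCount_zero]; omega)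
    (by rw [prefixCount_of_length_le le_rfl]; omega)
  have hvs : starVal w s = k + 1 := by simp [starVal, hxs]
  obtain hst | rfl | hts := lt_trichotomy s t
  · exact not_lt_of_unprimed hL1 hL2 hst htN hvs hxt (by omega)
  · simp [hxs] at hxt
  obtain ⟨y, -, -, hyN, hxy, hy⟩ := exists_primed (w := w) (κ := k) (i := 0) (j := w.length)
    (σ := cntU w k + 1) (by rw [mirrorCount_of_length_le le_rfl]; omega)
    (by rw [mirrorCount_zero]; omega)
  have hyt : y < t := by
    by_contra! hty
    have hty' : t < y := hty.lt_of_ne (by rintro rfl; simp [hxt] at hxy)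
    have := prefixCount_succ_of_unprimed htN hxt
    have := prefixCount_mono (w := w) (κ := k) (show t + 1 ≤ y from hty')
    have := hU y hyN hxy
    omega
  have := hL3 (cntU w k) hck y s (by omega) hsN (by simp [starVal, hxy])
    (by rw [starSub_of_primed hxy]; omega) hvs (by rw [starSub_of_unprimed hxs]; omega)
    t hyt.le hts.le (by simp [starVal, hxt])
  rw [starSub_of_unprimed hxt] at this
  omega

theorem stemFirst_of_lattice (hL1 : L1At w k) (hL2 : L2At w k) (hL3 : L3At w k)
    (hU : UnprimedAfterPrimed w k)
    (hpart : valCount w (k + 1) ≠ 0 → valCount w (k + 1) < valCount w k) : StemFirst w k := by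
  intro i hi hv heq
  by_cases hn : prefixCount w k i < cntU w k
  · obtain ⟨t, hit, -, htN, hxt, ht⟩ := exists_unprimed (w := w) (κ := k) (j := w.length)
      (m := prefixCount w k i) le_rfl (by rwa [prefixCount_of_length_le le_rfl])
    have hit' : i < t := hit.lt_of_ne (by rintro rfl; simp [starVal, hxt] at hv)
    exact not_lt_of_unprimed hL1 hL2 hit' htN hv hxt (by omega)
  · have hck := hU.cntU_pos (by have := hpart (valCount_pos hi hv).ne'; omega)
    have := prefixCount_le_cntU (w := w) (κ := k + 1) (i := i)
    have := cntU_succ_lt hL1 hL2 hL3 hU hpart (by omega)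
    omega

theorem mirrorCount_ne_of_primed_succ (hL3 : L3At w k)
    (hpart : valCount w (k + 1) ≠ 0 → valCount w (k + 1) < valCount w k)
    (hi : i < w.length) (hx : getL w i = (k + 1, true)) :
    mirrorCount w (k + 1) (i + 1) ≠ mirrorCount w k (i + 1) := by
  intro heq
  set M := mirrorCount w k (i + 1)
  have hvk : mirrorCount w (k + 1) i + 1 ≤ valCount w k := by
    have := mirrorCount_le_valCount (w := w) (κ := k + 1) (i := i)
    have := hpart (valCount_pos hi (by simp [starVal, hx])).ne'
    omega
  have := mirrorCount_eq_succ_add_one hi hx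
  obtain ⟨y₁, -, hy₁, -, hx₁, h₁⟩ := exists_primed (w := w) (κ := k) (i := 0) (j := i + 1)
    (σ := M + 1) (by omega) (by rw [mirrorCount_zero]; omega)
  obtain ⟨y₂, -, hy₂, -, hx₂, h₂⟩ := exists_primed (w := w) (κ := k) (i := 0) (j := i + 1)
    (σ := M + 2) (by omega) (by rw [mirrorCount_zero]; omega)
  have hy₂₁ : y₂ < y₁ := by
    by_contra! h
    have := mirrorCount_anti (w := w) (κ := k) (Nat.add_le_add_right h 1)
    omega
  have hy₁i : y₁ < i := (Nat.lt_succ_iff.mp hy₁).lt_of_ne (by rintro rfl; simp [hx] at hx₁)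
  have := hL3 (M + 1) (by omega) y₂ i (by omega) hi (by simp [starVal, hx₂])
    (by rw [starSub_of_primed hx₂]; omega) (by simp [starVal, hx])
    (by rw [starSub_of_primed hx]; omega) y₁ hy₂₁.le hy₁i.le (by simp [starVal, hx₁])
  rw [starSub_of_primed hx₁] at this
  omega

theorem mirrorCount_ne_of_unprimed (hL1 : L1At w k) (hL2 : L2At w k) (hL3 : L3At w k)
    (hU : UnprimedAfterPrimed w k)
    (hpart : valCount w (k + 1) ≠ 0 → valCount w (k + 1) < valCount w k)
    (hi : i < w.length) (hx : getL w i = (k, false)) :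
    mirrorCount w (k + 1) (i + 1) ≠ mirrorCount w k (i + 1) := by
  intro heq
  set M := mirrorCount w k (i + 1)
  have hcM : cntU w k ≤ M := cntU_le_mirrorCount
  have hfi := prefixCount_lt_cntU_of_unprimed hi hx
  have hMv : M + 1 ≤ valCount w k := by
    have := mirrorCount_le_valCount (w := w) (κ := k + 1) (i := i + 1)
    have := hpart (by omega)
    omega
  obtain ⟨y, -, hy, -, hxy, hy'⟩ := exists_primed (w := w) (κ := k) (i := 0) (j := i + 1)
    (σ := M + 1) (by omega) (by rw [mirrorCount_zero]; omega)
  have hyi : y < i := (Nat.lt_succ_iff.mp hy).lt_of_ne (by rintro rfl; simp [hx] at hxy)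
  by_cases hcM' : cntU w (k + 1) < M
  · obtain ⟨x, hix, -, hxN, hxx, hx'⟩ := exists_primed (w := w) (κ := k + 1) (i := i + 1)
      (j := w.length) (σ := M) (by rwa [mirrorCount_of_length_le le_rfl]) (by omega)
    have := hL3 M (by omega) y x (by omega) hxN (by simp [starVal, hxy])
      (by rw [starSub_of_primed hxy]; omega) (by simp [starVal, hxx])
      (by rw [starSub_of_primed hxx]; omega) i hyi.le (by omega) (by simp [starVal, hx])
    rw [starSub_of_unprimed hx] at this
    omega
  · have := cntU_succ_lt hL1 hL2 hL3 hU hpart (by omega)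
    omega

theorem stemSecond_of_lattice (hL1 : L1At w k) (hL2 : L2At w k) (hL3 : L3At w k)
    (hU : UnprimedAfterPrimed w k)
    (hpart : valCount w (k + 1) ≠ 0 → valCount w (k + 1) < valCount w k) :
    StemSecond w k
  | _, hi, .inl hx => mirrorCount_ne_of_primed_succ hL3 hpart hi hx
  | _, hi, .inr hx => mirrorCount_ne_of_unprimed hL1 hL2 hL3 hU hpart hi hx

end lattice

end StarredWord

theorem stmt5_general (w : List (ℕ × Bool))
    (hpart : ∀ k, 1 ≤ k → valCount w (k + 1) ≤ valCount w k ∧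
      (valCount w (k + 1) ≠ 0 → valCount w (k + 1) < valCount w k))
    (hright : ∀ k, 1 ≤ k → ∀ i < w.length, starVal w i = k →
      (∀ j, i < j → j < w.length → starVal w j ≠ k) → (getL w i).2 = false) :
    LatticeSt w ↔ LatticeNew w := by
  rw [StarredWord.latticeSt_iff, StarredWord.latticeNew_iff]
  refine forall₂_congr fun k hk =>
    ⟨fun ⟨hA, hB⟩ => ⟨hA.l1At, hA.l2At, hB.l3At hA⟩, fun ⟨hL1, hL2, hL3⟩ => ?_⟩
  have hU := StarredWord.unprimedAfterPrimed_of_rightmost_unprimed (hright k hk)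
  exact ⟨StarredWord.stemFirst_of_lattice hL1 hL2 hL3 hU (hpart k hk).2,
    StarredWord.stemSecond_of_lattice hL1 hL2 hL3 hU (hpart k hk).2⟩

/-- For a word `w` over 𝒩 whose value-counts form a strict partition and in which, for
every `k ≥ 1`, the rightmost letter of value `k` is unprimed, Stembridge's lattice
property (Definition 3.5) is equivalent to the "lattice property" of Definition 3.3. -/
theorem stmt5 (w : List (ℕ × Bool)) (hpos : ∀ x ∈ w, 1 ≤ x.1)
    (hpart : ∀ k, 1 ≤ k → valCount w (k + 1) ≤ valCount w k ∧
      (valCount w (k + 1) ≠ 0 → valCount w (k + 1) < valCount w k))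
    (hright : ∀ k, 1 ≤ k → ∀ i < w.length, starVal w i = k →
      (∀ j, i < j → j < w.length → starVal w j ≠ k) → (getL w i).2 = false) :
    LatticeSt w ↔ LatticeNew w :=
  stmt5_general w hpart hright
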